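/- arXiv:math/0610905 — 4 statements merged into one kernel-verified Lean document; each statement's English description precedes it below -/
import Mathlib

section
/- Let Ψ be an Orlicz function and μ a finite positive Borel measure on the closed unit disk {z ∈ ℂ : |z| ≤ 1}. The following are equivalent: (i) there exists A > 0 such that μ(W(ξ,h)) ≤ 1/Ψ(A·Ψ⁻¹(1/h)) for every ξ ∈ 𝕋 and every h ∈ (0,1) (μ is a Ψ-Carleson measure); (ii) there exists C > 0 such that the Luxemburg norm of u_{ξ,1−h} in L^Ψ(μ) satisfies ‖u_{ξ,1−h}‖_{L^Ψ(μ)} ≤ C/Ψ⁻¹(1/h) for every ξ ∈ 𝕋 and every h ∈ (0,1). -/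
open MeasureTheory

/-- The Luxemburg norm of a complex-valued function with respect to an Orlicz
function `Ψ` and a measure `μ`, with the convention `inf ∅ = ∞`. -/
noncomputable def luxNorm {α : Type*} [MeasurableSpace α] (Ψ : ℝ → ℝ)
    (μ : Measure α) (f : α → ℂ) : ENNReal :=
  sInf {C : ENNReal | ∃ c : ℝ, 0 < c ∧ C = ENNReal.ofReal c ∧
    (∫⁻ a, ENNReal.ofReal (Ψ (‖f a‖ / c)) ∂μ) ≤ 1}

/-- The Carleson window `W(ξ,h)`. -/
def carlesonWindow (ξ : ℂ) (h : ℝ) : Set ℂ :=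
  {z : ℂ | ‖z‖ ≤ 1 ∧ 1 - h < ‖z‖ ∧
    |Complex.arg (z * (starRingEnd ℂ) ξ)| < h}

/-- The function `u_{a,r}(z) = ((1-r)/(1 - conj(a)·r·z))²`. -/
noncomputable def uar (a : ℂ) (r : ℝ) (z : ℂ) : ℂ :=
  (((1 : ℂ) - (r : ℂ)) / (1 - (starRingEnd ℂ) a * (r : ℂ) * z)) ^ 2


/-! The kernel satisfies `|u_{ξ,1-h}(z)| = (h / |1 - (1-h) ξ̄ z|)²`, and `h ≤ |1 - (1-h) ξ̄ z|` on
the closed disk. Up to constants, the sets where `|1 - (1-h) ξ̄ z| < s` are sandwiched between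
Carleson windows: `W(ξ,h)` lies in the one with `s = 3h`, and for `s ≤ 1/4` the one of level `s`
lies in `W(ξ,3s)`.

Hence `|u| ≥ 1/9` on `W(ξ,h)`, and Chebyshev's inequality turns a Luxemburg bound into a window
bound. Conversely, split the disk according to `|1 - (1-h) ξ̄ z| ∈ [2ʲh, 2ʲ⁺¹h)`, where
`|u| ≤ 4⁻ʲ`. The window bound at scale `3·2ʲ⁺¹h` (or, at large scales, the total mass of `μ`)
together with the convexity estimates `Ψ(tx) ≤ tΨ(x)` and `tΨ⁻¹(y) ≤ Ψ⁻¹(ty)` for `t ≤ 1` shows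
that the `j`-th piece contributes at most `2⁻ʲ⁻¹` to `∫ Ψ(|u|/c) dμ` when
`c = C / Ψ⁻¹(1/h)` with `C` large. -/

open ComplexConjugate Set

lemma ConvexOn.map_smul_le_smul {E : Type*} [AddCommGroup E] [Module ℝ E] {s : Set E}
    {f : E → ℝ} (hf : ConvexOn ℝ s f) (h0 : (0 : E) ∈ s) (hf0 : f 0 ≤ 0) {x : E} (hx : x ∈ s)
    {t : ℝ} (ht0 : 0 ≤ t) (ht1 : t ≤ 1) : f (t • x) ≤ t * f x := by
  have := hf.2 h0 hx (sub_nonneg.2 ht1) ht0 (by ring)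
  simp only [smul_zero, zero_add, smul_eq_mul] at this
  nlinarith

section Orlicz

variable {Ψ Ψinv : ℝ → ℝ}

lemma orlicz_pos (hΨ0 : Ψ 0 = 0) (hΨmono : StrictMonoOn Ψ (Ici 0)) {x : ℝ} (hx : 0 < x) :
    0 < Ψ x :=
  hΨ0 ▸ hΨmono self_mem_Ici hx.le hx

lemma orlicz_mul_le (hΨ0 : Ψ 0 = 0) (hΨconv : ConvexOn ℝ (Ici 0) Ψ) {t y : ℝ}
    (ht0 : 0 ≤ t) (ht1 : t ≤ 1) (hy : 0 ≤ y) : Ψ (t * y) ≤ t * Ψ y :=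
  hΨconv.map_smul_le_smul self_mem_Ici hΨ0.le hy ht0 ht1

lemma ofReal_orlicz_mul_le (hΨ0 : Ψ 0 = 0) (hΨconv : ConvexOn ℝ (Ici 0) Ψ) {x y : ℝ}
    (hx : 0 ≤ x) (hxy : x ≤ y) {m : ENNReal} (hm : ENNReal.ofReal (Ψ y) * m ≤ 1) :
    ENNReal.ofReal (Ψ x) * m ≤ ENNReal.ofReal (x / y) := by
  rcases hx.eq_or_lt with rfl | hx
  · simp [hΨ0]
  have hy : 0 < y := hx.trans_le hxy
  have hchord : Ψ x ≤ x / y * Ψ y := by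
    simpa [div_mul_cancel₀ x hy.ne'] using orlicz_mul_le hΨ0 hΨconv (t := x / y)
      (div_nonneg hx.le hy.le) ((div_le_one hy).2 hxy) hy.le
  calc ENNReal.ofReal (Ψ x) * m ≤ ENNReal.ofReal (x / y) * (ENNReal.ofReal (Ψ y) * m) := by
        rw [← mul_assoc, ← ENNReal.ofReal_mul (by positivity)]
        gcongr
    _ ≤ ENNReal.ofReal (x / y) := mul_le_of_le_one_right' hm

lemma rightInv_pos (hΨ0 : Ψ 0 = 0) (hΨinv2 : ∀ y, 0 ≤ y → Ψ (Ψinv y) = y)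
    (hΨinv0 : ∀ y, 0 ≤ y → 0 ≤ Ψinv y) {t : ℝ} (ht : 0 < t) : 0 < Ψinv t := by
  refine (hΨinv0 t ht.le).lt_of_ne fun h => ht.ne ?_
  rw [← hΨinv2 t ht.le, ← h, hΨ0]

lemma mul_rightInv_le (hΨ0 : Ψ 0 = 0) (hΨmono : StrictMonoOn Ψ (Ici 0))
    (hΨconv : ConvexOn ℝ (Ici 0) Ψ) (hΨinv2 : ∀ y, 0 ≤ y → Ψ (Ψinv y) = y)
    (hΨinv0 : ∀ y, 0 ≤ y → 0 ≤ Ψinv y) {t y : ℝ} (ht0 : 0 ≤ t) (ht1 : t ≤ 1) (hy : 0 ≤ y) :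
    t * Ψinv y ≤ Ψinv (t * y) := by
  have hty : 0 ≤ t * y := mul_nonneg ht0 hy
  rw [← hΨmono.le_iff_le (mul_nonneg ht0 (hΨinv0 y hy)) (hΨinv0 _ hty), hΨinv2 _ hty]
  simpa [hΨinv2 y hy] using orlicz_mul_le hΨ0 hΨconv ht0 ht1 (hΨinv0 y hy)

end Orlicz

section Geometry

lemma abs_arg_le_pi_div_two_mul {z : ℂ} (hz : 0 ≤ z.re) :
    |z.arg| ≤ Real.pi / 2 * (|z.im| / ‖z‖) := by
  have hjordan := Real.mul_abs_le_abs_sin (Complex.abs_arg_le_pi_div_two_iff.2 hz)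
  rw [Complex.sin_arg, abs_div, abs_norm] at hjordan
  calc |z.arg| = Real.pi / 2 * (2 / Real.pi * |z.arg|) := by field_simp
    _ ≤ Real.pi / 2 * (|z.im| / ‖z‖) := by gcongr

lemma norm_one_sub_le (w : ℂ) : ‖1 - w‖ ≤ |1 - ‖w‖| + ‖w‖ * |w.arg| := by
  have hpolar : 1 - w = ((1 - ‖w‖ : ℝ) : ℂ) + ‖w‖ * -(Complex.exp (Complex.I * w.arg) - 1) := by
    conv_lhs => rw [← Complex.norm_mul_exp_arg_mul_I w]
    push_cast
    ring_nf
  rw [hpolar]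
  refine (norm_add_le _ _).trans ?_
  rw [Complex.norm_real, norm_mul, norm_neg, Complex.norm_real, norm_norm, Real.norm_eq_abs]
  gcongr
  simpa using Real.norm_exp_I_mul_ofReal_sub_one_le (x := w.arg)

lemma mem_carlesonWindow_iff_mul_conj {ξ z : ℂ} (hξ : ‖ξ‖ = 1) {h : ℝ} :
    z ∈ carlesonWindow ξ h ↔ z * conj ξ ∈ carlesonWindow 1 h := by
  simp [carlesonWindow, hξ]

lemma le_norm_one_sub_mul {h : ℝ} (h1 : h ≤ 1) {w : ℂ} (hw : ‖w‖ ≤ 1) :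
    h ≤ ‖1 - (1 - h) * w‖ := by
  have hnorm : ‖(1 - h : ℂ) * w‖ = (1 - h) * ‖w‖ := by
    rw [norm_mul, ← Complex.ofReal_one, ← Complex.ofReal_sub, Complex.norm_real,
      Real.norm_of_nonneg (by linarith)]
  have := norm_sub_norm_le (1 : ℂ) ((1 - h) * w)
  rw [norm_one, hnorm] at this
  nlinarith

lemma norm_one_sub_mul_le_of_mem_carlesonWindow {h : ℝ} {w : ℂ}
    (hw : w ∈ carlesonWindow 1 h) : ‖1 - (1 - h) * w‖ ≤ 3 * h := by
  obtain ⟨hw1, hwh, harg⟩ := hw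
  simp only [map_one, mul_one] at harg
  have h0 : 0 < h := (abs_nonneg _).trans_lt harg
  have hsplit : 1 - (1 - h) * w = (1 - w) + h * w := by ring
  have hpolar := norm_one_sub_le w
  rw [abs_of_nonneg (by linarith)] at hpolar
  calc ‖1 - (1 - h) * w‖ ≤ ‖1 - w‖ + h * ‖w‖ := by
        rw [hsplit]
        refine (norm_add_le _ _).trans_eq ?_
        rw [norm_mul, Complex.norm_real, Real.norm_of_nonneg h0.le]
    _ ≤ 3 * h := by nlinarith [abs_nonneg w.arg, norm_nonneg w]

lemma mem_carlesonWindow_of_norm_one_sub_mul_lt {h s : ℝ} (h0 : 0 ≤ h) (h1 : h < 1)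
    (hs : s ≤ 1 / 4) {w : ℂ} (hw : ‖w‖ ≤ 1) (hlt : ‖1 - (1 - h) * w‖ < s) :
    w ∈ carlesonWindow 1 (3 * s) := by
  set v : ℂ := (1 - h) * w with hv
  have hvw : v = ((1 - h : ℝ) : ℂ) * w := by push_cast; rfl
  have hv_le : ‖v‖ ≤ ‖w‖ := by
    rw [hvw, norm_mul, Complex.norm_real, Real.norm_of_nonneg (by linarith)]
    nlinarith [norm_nonneg w]
  have hv_norm : 1 - s < ‖v‖ := by
    have := norm_sub_norm_le (1 : ℂ) v
    rw [norm_one] at this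
    linarith
  have hv_re : 1 - s < v.re := by
    have := Complex.re_le_norm (1 - v)
    simp only [Complex.sub_re, Complex.one_re] at this
    linarith
  have hv_im : |v.im| < s := by
    have := Complex.abs_im_le_norm (1 - v)
    simp only [Complex.sub_im, Complex.one_im, zero_sub, abs_neg] at this
    linarith
  have harg : w.arg = v.arg := by rw [hvw, Complex.arg_real_mul _ (by linarith)]
  refine ⟨hw, by linarith, ?_⟩
  simp only [map_one, mul_one, harg]
  calc |v.arg| ≤ Real.pi / 2 * (|v.im| / ‖v‖) := abs_arg_le_pi_div_two_mul (by linarith)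
    _ ≤ 2 * (s / (3 / 4)) := by
        gcongr
        · linarith [Real.pi_le_four]
        · linarith
        · linarith
    _ < 3 * s := by linarith [(abs_nonneg v.im).trans_lt hv_im]

lemma norm_uar_eq (ξ z : ℂ) {h : ℝ} (h0 : 0 ≤ h) :
    ‖uar ξ (1 - h) z‖ = (h / ‖1 - (1 - h) * (z * conj ξ)‖) ^ 2 := by
  rw [uar, norm_pow, norm_div]
  push_cast
  rw [sub_sub_cancel, Complex.norm_real, Real.norm_of_nonneg h0]
  ring_nf

end Geometry

section Luxemburg

variable {α : Type*} [MeasurableSpace α] {Ψ : ℝ → ℝ} {μ : Measure α} {f : α → ℂ}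

lemma luxNorm_le_ofReal {c : ℝ} (hc : 0 < c)
    (hf : ∫⁻ a, ENNReal.ofReal (Ψ (‖f a‖ / c)) ∂μ ≤ 1) : luxNorm Ψ μ f ≤ ENNReal.ofReal c :=
  sInf_le ⟨c, hc, rfl, hf⟩

lemma exists_lintegral_le_one_of_luxNorm_lt {b : ℝ} (hf : luxNorm Ψ μ f < ENNReal.ofReal b) :
    ∃ c, 0 < c ∧ c < b ∧ ∫⁻ a, ENNReal.ofReal (Ψ (‖f a‖ / c)) ∂μ ≤ 1 := by
  obtain ⟨_, ⟨c, hc, rfl, hint⟩, hlt⟩ := sInf_lt_iff.1 hf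
  exact ⟨c, hc, (ENNReal.ofReal_lt_ofReal_iff_of_nonneg hc.le).1 hlt, hint⟩

lemma ofReal_orlicz_mul_measure_le_one (hΨmono : StrictMonoOn Ψ (Ici 0)) {S : Set α}
    (hS : MeasurableSet S) {δ c : ℝ} (hδ : 0 ≤ δ) (hc : 0 < c) (hfS : ∀ a ∈ S, δ ≤ ‖f a‖)
    (hf : ∫⁻ a, ENNReal.ofReal (Ψ (‖f a‖ / c)) ∂μ ≤ 1) :
    ENNReal.ofReal (Ψ (δ / c)) * μ S ≤ 1 := by
  calc ENNReal.ofReal (Ψ (δ / c)) * μ S = ∫⁻ a in S, ENNReal.ofReal (Ψ (δ / c)) ∂μ :=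
        (setLIntegral_const S _).symm
    _ ≤ ∫⁻ a in S, ENNReal.ofReal (Ψ (‖f a‖ / c)) ∂μ := by
        refine setLIntegral_mono' hS fun a ha => ENNReal.ofReal_le_ofReal ?_
        exact hΨmono.monotoneOn (div_nonneg hδ hc.le) (div_nonneg (norm_nonneg _) hc.le)
          (div_le_div_of_nonneg_right (hfS a ha) hc.le)
    _ ≤ ∫⁻ a, ENNReal.ofReal (Ψ (‖f a‖ / c)) ∂μ := setLIntegral_le_lintegral S _
    _ ≤ 1 := hf

end Luxemburg

lemma MeasureTheory.lintegral_le_tsum_mul_measure {α ι : Type*} [MeasurableSpace α] [Countable ι]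
    {μ : Measure α} {g : α → ENNReal} {a : ι → ENNReal} {F : ι → Set α}
    (hF : ∀ j, MeasurableSet (F j)) (hg : ∀ᵐ x ∂μ, ∃ j, x ∈ F j ∧ g x ≤ a j) :
    ∫⁻ x, g x ∂μ ≤ ∑' j, a j * μ (F j) := by
  calc ∫⁻ x, g x ∂μ ≤ ∫⁻ x, ∑' j, (F j).indicator (fun _ => a j) x ∂μ := by
        refine lintegral_mono_ae (hg.mono fun x ⟨j, hxj, hgx⟩ => ?_)
        exact hgx.trans ((indicator_of_mem hxj (fun _ => a j)).symm.trans_le (ENNReal.le_tsum j))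
    _ = ∑' j, a j * μ (F j) := by
        rw [lintegral_tsum fun j => (measurable_const.indicator (hF j)).aemeasurable]
        exact tsum_congr fun j => lintegral_indicator_const (hF j) _

lemma le_ofReal_one_div_iff {p : ℝ} (hp : 0 < p) {m : ENNReal} :
    m ≤ ENNReal.ofReal (1 / p) ↔ ENNReal.ofReal p * m ≤ 1 := by
  rw [one_div, ENNReal.ofReal_inv_of_pos hp, ENNReal.le_inv_iff_mul_le, mul_comm]

lemma measurableSet_carlesonWindow (ξ : ℂ) (h : ℝ) : MeasurableSet (carlesonWindow ξ h) := by
  have hnorm : Measurable fun z : ℂ => ‖z‖ := continuous_norm.measurable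
  have harg : Measurable fun z : ℂ => |Complex.arg (z * conj ξ)| :=
    (Complex.measurable_arg.comp (measurable_mul_const _)).abs
  exact (measurableSet_le hnorm measurable_const).inter
    ((measurableSet_lt measurable_const hnorm).inter (measurableSet_lt harg measurable_const))

lemma tsum_ofReal_inv_two_pow_succ : ∑' j : ℕ, ENNReal.ofReal ((2 : ℝ)⁻¹ ^ (j + 1)) = 1 := by
  simp_rw [ENNReal.ofReal_pow (by norm_num : (0 : ℝ) ≤ 2⁻¹), ENNReal.ofReal_inv_of_pos two_pos,
    ENNReal.ofReal_ofNat, ENNReal.tsum_geometric_add_one, ENNReal.one_sub_inv_two, inv_inv]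
  exact ENNReal.inv_mul_cancel two_ne_zero ENNReal.ofNat_ne_top

lemma one_div_nine_le_norm_uar {ξ : ℂ} (hξ : ‖ξ‖ = 1) {h : ℝ} (h0 : 0 < h) (h1 : h ≤ 1) {z : ℂ}
    (hz : z ∈ carlesonWindow ξ h) : 1 / 9 ≤ ‖uar ξ (1 - h) z‖ := by
  have hw := (mem_carlesonWindow_iff_mul_conj hξ).1 hz
  have hupper := norm_one_sub_mul_le_of_mem_carlesonWindow hw
  have hlower := le_norm_one_sub_mul h1 hw.1
  rw [norm_uar_eq ξ z h0.le]
  calc (1 : ℝ) / 9 = (h / (3 * h)) ^ 2 := by field_simp; norm_num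
    _ ≤ _ := by gcongr; linarith

lemma measure_carlesonWindow_le_of_luxNorm_uar_le {Ψ : ℝ → ℝ} (hΨ0 : Ψ 0 = 0)
    (hΨmono : StrictMonoOn Ψ (Ici 0)) {μ : Measure ℂ} {ξ : ℂ} (hξ : ‖ξ‖ = 1) {h : ℝ}
    (h0 : 0 < h) (h1 : h ≤ 1) {C M : ℝ} (hC : 0 ≤ C) (hM : 0 < M)
    (hu : luxNorm Ψ μ (uar ξ (1 - h)) ≤ ENNReal.ofReal (C / M)) :
    μ (carlesonWindow ξ h) ≤ ENNReal.ofReal (1 / Ψ (1 / (9 * (C + 1)) * M)) := by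
  obtain ⟨c, hc, hcC, hint⟩ := exists_lintegral_le_one_of_luxNorm_lt (b := (C + 1) / M)
    (hu.trans_lt ((ENNReal.ofReal_lt_ofReal_iff (by positivity)).2 (by gcongr; linarith)))
  have hbound := ofReal_orlicz_mul_measure_le_one hΨmono (measurableSet_carlesonWindow ξ h)
    (by norm_num) hc (fun z hz => one_div_nine_le_norm_uar hξ h0 h1 hz) hint
  rw [le_ofReal_one_div_iff (orlicz_pos hΨ0 hΨmono (by positivity))]
  refine le_trans (mul_le_mul_left (ENNReal.ofReal_le_ofReal ?_) _) hbound
  refine hΨmono.monotoneOn (mem_Ici.2 (by positivity)) (mem_Ici.2 (by positivity)) ?_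
  rw [lt_div_iff₀ hM] at hcC
  rw [div_mul_eq_mul_div, one_mul, div_div, div_le_div_iff₀ (by positivity) (by positivity)]
  nlinarith

def kernelSublevel (ξ : ℂ) (h s : ℝ) : Set ℂ :=
  {z | ‖z‖ ≤ 1 ∧ ‖1 - (1 - h) * (z * conj ξ)‖ < s}

lemma measurableSet_kernelSublevel (ξ : ℂ) (h s : ℝ) :
    MeasurableSet (kernelSublevel ξ h s) := by
  rw [kernelSublevel, ofPred_and]
  exact (measurableSet_le continuous_norm.measurable measurable_const).inter
    (measurableSet_lt (Continuous.measurable (by fun_prop)) measurable_const)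

lemma exists_mem_kernelSublevel_norm_uar_le {ξ : ℂ} (hξ : ‖ξ‖ = 1) {h : ℝ} (h0 : 0 < h)
    (h1 : h ≤ 1) {z : ℂ} (hz : ‖z‖ ≤ 1) :
    ∃ j : ℕ, z ∈ kernelSublevel ξ h (h / 2⁻¹ ^ (j + 1)) ∧
      ‖uar ξ (1 - h) z‖ ≤ 4 * (2⁻¹ ^ (j + 1)) ^ 2 := by
  set D := ‖1 - (1 - h) * (z * conj ξ)‖
  have hD : h ≤ D := le_norm_one_sub_mul h1 (by simpa [hξ] using hz)
  obtain ⟨n, hn1, hn2⟩ := exists_nat_pow_near ((one_le_div h0).2 hD) one_lt_two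
  rw [le_div_iff₀ h0] at hn1
  rw [div_lt_iff₀ h0] at hn2
  refine ⟨n, ⟨hz, by rwa [inv_pow, div_inv_eq_mul, mul_comm h]⟩, ?_⟩
  rw [norm_uar_eq ξ z h0.le]
  calc (h / D) ^ 2 ≤ (h / (2 ^ n * h)) ^ 2 := by gcongr
    _ = 4 * (2⁻¹ ^ (n + 1)) ^ 2 := by rw [inv_pow]; field_simp; ring

section Carleson

variable {Ψ Ψinv : ℝ → ℝ}

lemma ofReal_orlicz_mul_measure_kernelSublevel_le_one (hΨ0 : Ψ 0 = 0)
    (hΨmono : StrictMonoOn Ψ (Ici 0)) (hΨconv : ConvexOn ℝ (Ici 0) Ψ)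
    (hΨinv2 : ∀ y, 0 ≤ y → Ψ (Ψinv y) = y) (hΨinv0 : ∀ y, 0 ≤ y → 0 ≤ Ψinv y)
    {μ : Measure ℂ} [IsFiniteMeasure μ] {A B : ℝ} (hB0 : 0 ≤ B) (hBA : 3 * B ≤ A)
    (hBμ : 4 * B * ((μ univ).toReal + 1) ≤ 1)
    (hW : ∀ ξ : ℂ, ‖ξ‖ = 1 → ∀ t : ℝ, 0 < t → t < 1 →
      ENNReal.ofReal (Ψ (A * Ψinv (1 / t))) * μ (carlesonWindow ξ t) ≤ 1)
    {ξ : ℂ} (hξ : ‖ξ‖ = 1) {h : ℝ} (h0 : 0 < h) (h1 : h < 1) {r : ℝ} (hr0 : 0 < r)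
    (hr1 : r ≤ 1) :
    ENNReal.ofReal (Ψ (B * r * Ψinv (1 / h))) * μ (kernelSublevel ξ h (h / r)) ≤ 1 := by
  set M := Ψinv (1 / h)
  have hM : 0 < M := rightInv_pos hΨ0 hΨinv2 hΨinv0 (by positivity)
  have hΨmono' := hΨmono.monotoneOn
  by_cases hhr : h / r ≤ 1 / 4
  · set t := 3 * (h / r)
    have hsub : kernelSublevel ξ h (h / r) ⊆ carlesonWindow ξ t := fun z ⟨hz, hlt⟩ =>
      (mem_carlesonWindow_iff_mul_conj hξ).2
        (mem_carlesonWindow_of_norm_one_sub_mul_lt h0.le h1 hhr (by simpa [hξ] using hz) hlt)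
    have hBM : B * r * M ≤ A * Ψinv (1 / t) :=
      calc B * r * M ≤ A * (r / 3 * M) := by
            nlinarith [mul_nonneg (sub_nonneg.2 hBA) (mul_nonneg hr0.le hM.le)]
        _ ≤ A * Ψinv (r / 3 * (1 / h)) := by
          gcongr
          · linarith
          · exact mul_rightInv_le hΨ0 hΨmono hΨconv hΨinv2 hΨinv0 (by positivity) (by linarith)
              (by positivity)
        _ = A * Ψinv (1 / t) := by congr 2; simp only [t]; field_simp
    calc ENNReal.ofReal (Ψ (B * r * M)) * μ (kernelSublevel ξ h (h / r))
        ≤ ENNReal.ofReal (Ψ (A * Ψinv (1 / t))) * μ (carlesonWindow ξ t) := by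
          gcongr
          exact hΨmono' (mem_Ici.2 (by positivity))
            (mem_Ici.2 (mul_nonneg (by linarith) (hΨinv0 _ (by positivity)))) hBM
      _ ≤ 1 := hW ξ hξ t (by positivity) (by linarith)
  · rw [not_le, lt_div_iff₀ hr0] at hhr
    have hrM : r * M ≤ 4 * Ψinv 1 := by
      have hhM := mul_rightInv_le hΨ0 hΨmono hΨconv hΨinv2 hΨinv0 h0.le h1.le
        (one_div_nonneg.2 h0.le)
      rw [mul_one_div_cancel h0.ne'] at hhM
      nlinarith [mul_lt_mul_of_pos_right hhr hM]
    have hΨB : Ψ (B * r * M) ≤ 4 * B :=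
      calc Ψ (B * r * M) ≤ Ψ (4 * B * Ψinv 1) :=
            hΨmono' (mem_Ici.2 (by positivity))
              (mem_Ici.2 (mul_nonneg (by positivity) (hΨinv0 1 zero_le_one))) (by nlinarith)
        _ ≤ 4 * B * Ψ (Ψinv 1) :=
            orlicz_mul_le hΨ0 hΨconv (by positivity)
              (by nlinarith [ENNReal.toReal_nonneg (a := μ univ)]) (hΨinv0 1 zero_le_one)
        _ = 4 * B := by rw [hΨinv2 1 zero_le_one, mul_one]
    calc ENNReal.ofReal (Ψ (B * r * M)) * μ (kernelSublevel ξ h (h / r))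
        ≤ ENNReal.ofReal (4 * B) * ENNReal.ofReal (μ univ).toReal := by
          rw [ENNReal.ofReal_toReal (measure_ne_top μ univ)]
          gcongr
          exact subset_univ _
      _ ≤ 1 := by
          rw [← ENNReal.ofReal_mul (by positivity), ENNReal.ofReal_le_one]
          nlinarith

lemma exists_luxNorm_uar_le_of_carleson (hΨ0 : Ψ 0 = 0)
    (hΨmono : StrictMonoOn Ψ (Ici 0)) (hΨconv : ConvexOn ℝ (Ici 0) Ψ)
    (hΨinv2 : ∀ y, 0 ≤ y → Ψ (Ψinv y) = y) (hΨinv0 : ∀ y, 0 ≤ y → 0 ≤ Ψinv y)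
    {μ : Measure ℂ} [IsFiniteMeasure μ] (hμ : μ (Metric.closedBall (0 : ℂ) 1)ᶜ = 0) {A : ℝ}
    (hA : 0 < A) (hW : ∀ ξ : ℂ, ‖ξ‖ = 1 → ∀ h : ℝ, 0 < h → h < 1 →
      μ (carlesonWindow ξ h) ≤ ENNReal.ofReal (1 / Ψ (A * Ψinv (1 / h)))) :
    ∃ C > (0 : ℝ), ∀ ξ : ℂ, ‖ξ‖ = 1 → ∀ h : ℝ, 0 < h → h < 1 →
      luxNorm Ψ μ (uar ξ (1 - h)) ≤ ENNReal.ofReal (C / Ψinv (1 / h)) := by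
  set B := min (A / 3) (1 / (4 * ((μ univ).toReal + 1)))
  have hB0 : 0 < B := lt_min (by positivity) (by positivity)
  have hBμ : 4 * B * ((μ univ).toReal + 1) ≤ 1 := by
    have := min_le_right (A / 3) (1 / (4 * ((μ univ).toReal + 1)))
    rw [le_div_iff₀ (by positivity)] at this
    linarith
  have hW' : ∀ ξ : ℂ, ‖ξ‖ = 1 → ∀ t : ℝ, 0 < t → t < 1 →
      ENNReal.ofReal (Ψ (A * Ψinv (1 / t))) * μ (carlesonWindow ξ t) ≤ 1 :=
    fun ξ hξ t ht0 ht1 => (le_ofReal_one_div_iff (orlicz_pos hΨ0 hΨmono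
      (mul_pos hA (rightInv_pos hΨ0 hΨinv2 hΨinv0 (by positivity))))).1 (hW ξ hξ t ht0 ht1)
  have hdisk : ∀ᵐ z ∂μ, ‖z‖ ≤ 1 := by
    simpa using measure_eq_zero_iff_ae_notMem.1 hμ
  refine ⟨4 / B, by positivity, fun ξ hξ h h0 h1 => ?_⟩
  set M := Ψinv (1 / h)
  have hM : 0 < M := rightInv_pos hΨ0 hΨinv2 hΨinv0 (by positivity)
  refine luxNorm_le_ofReal (by positivity) ?_
  calc ∫⁻ z, ENNReal.ofReal (Ψ (‖uar ξ (1 - h) z‖ / (4 / B / M))) ∂μ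
      ≤ ∑' j : ℕ, ENNReal.ofReal (Ψ (4 * (2⁻¹ ^ (j + 1)) ^ 2 / (4 / B / M))) *
          μ (kernelSublevel ξ h (h / 2⁻¹ ^ (j + 1))) := by
        refine lintegral_le_tsum_mul_measure (fun j => measurableSet_kernelSublevel ξ h _) ?_
        filter_upwards [hdisk] with z hz
        obtain ⟨j, hj, hu⟩ := exists_mem_kernelSublevel_norm_uar_le hξ h0 h1.le hz
        refine ⟨j, hj, ENNReal.ofReal_le_ofReal (hΨmono.monotoneOn ?_ ?_ (by gcongr))⟩ <;>
          exact mem_Ici.2 (by positivity)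
    _ ≤ ∑' j : ℕ, ENNReal.ofReal (2⁻¹ ^ (j + 1)) := by
        refine ENNReal.tsum_le_tsum fun j => ?_
        set r : ℝ := 2⁻¹ ^ (j + 1)
        have hr0 : 0 < r := by positivity
        have hr1 : r ≤ 1 := pow_le_one₀ (by norm_num) (by norm_num)
        have hx : 4 * r ^ 2 / (4 / B / M) = r * (B * r * M) := by field_simp
        have hy : 0 < B * r * M := by positivity
        calc ENNReal.ofReal (Ψ (4 * r ^ 2 / (4 / B / M))) * μ (kernelSublevel ξ h (h / r))
            ≤ ENNReal.ofReal (4 * r ^ 2 / (4 / B / M) / (B * r * M)) := by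
              refine ofReal_orlicz_mul_le hΨ0 hΨconv (by positivity)
                (by rw [hx]; exact mul_le_of_le_one_left hy.le hr1) ?_
              exact ofReal_orlicz_mul_measure_kernelSublevel_le_one hΨ0 hΨmono hΨconv hΨinv2
                hΨinv0 hB0.le (by linarith [min_le_left (A / 3) (1 / (4 * ((μ univ).toReal + 1)))])
                hBμ hW' hξ h0 h1 hr0 hr1
          _ = ENNReal.ofReal r := by rw [hx, mul_div_assoc, div_self hy.ne', mul_one]
    _ = 1 := tsum_ofReal_inv_two_pow_succ

end Carleson

theorem stmt_14_general
    (Ψ Ψinv : ℝ → ℝ)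
    (hΨ0 : Ψ 0 = 0)
    (hΨmono : StrictMonoOn Ψ (Set.Ici 0))
    (hΨconv : StrictConvexOn ℝ (Set.Ici 0) Ψ)
    (hΨinv2 : ∀ y, 0 ≤ y → Ψ (Ψinv y) = y)
    (hΨinv0 : ∀ y, 0 ≤ y → 0 ≤ Ψinv y)
    (μ : Measure ℂ) [IsFiniteMeasure μ]
    (hμ : μ (Metric.closedBall (0 : ℂ) 1)ᶜ = 0) :
    (∃ A > (0 : ℝ), ∀ ξ : ℂ, ‖ξ‖ = 1 → ∀ h : ℝ, 0 < h → h < 1 →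
      μ (carlesonWindow ξ h) ≤ ENNReal.ofReal (1 / Ψ (A * Ψinv (1 / h))))
    ↔
    (∃ C > (0 : ℝ), ∀ ξ : ℂ, ‖ξ‖ = 1 → ∀ h : ℝ, 0 < h → h < 1 →
      luxNorm Ψ μ (uar ξ (1 - h)) ≤ ENNReal.ofReal (C / Ψinv (1 / h))) := by
  constructor
  · rintro ⟨A, hA, hW⟩
    exact exists_luxNorm_uar_le_of_carleson hΨ0 hΨmono hΨconv.convexOn hΨinv2 hΨinv0 hμ hA hW
  · rintro ⟨C, hC, hu⟩
    refine ⟨1 / (9 * (C + 1)), by positivity, fun ξ hξ h h0 h1 => ?_⟩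
    exact measure_carlesonWindow_le_of_luxNorm_uar_le hΨ0 hΨmono hξ h0 h1.le hC.le
      (rightInv_pos hΨ0 hΨinv2 hΨinv0 (by positivity)) (hu ξ hξ h h0 h1)

theorem stmt_14
    (Ψ Ψinv : ℝ → ℝ)
    (hΨ0 : Ψ 0 = 0)
    (hΨmono : StrictMonoOn Ψ (Set.Ici 0))
    (hΨconv : StrictConvexOn ℝ (Set.Ici 0) Ψ)
    (hΨcont : ContinuousOn Ψ (Set.Ici 0))
    (hΨlim : Filter.Tendsto (fun x => Ψ x / x) Filter.atTop Filter.atTop)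
    (hΨinv1 : ∀ x, 0 ≤ x → Ψinv (Ψ x) = x)
    (hΨinv2 : ∀ y, 0 ≤ y → Ψ (Ψinv y) = y)
    (hΨinv0 : ∀ y, 0 ≤ y → 0 ≤ Ψinv y)
    (μ : Measure ℂ) [IsFiniteMeasure μ]
    (hμ : μ (Metric.closedBall (0 : ℂ) 1)ᶜ = 0) :
    (∃ A > (0 : ℝ), ∀ ξ : ℂ, ‖ξ‖ = 1 → ∀ h : ℝ, 0 < h → h < 1 →
      μ (carlesonWindow ξ h) ≤ ENNReal.ofReal (1 / Ψ (A * Ψinv (1 / h))))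
    ↔
    (∃ C > (0 : ℝ), ∀ ξ : ℂ, ‖ξ‖ = 1 → ∀ h : ℝ, 0 < h → h < 1 →
      luxNorm Ψ μ (uar ξ (1 - h)) ≤ ENNReal.ofReal (C / Ψinv (1 / h))) :=
  stmt_14_general Ψ Ψinv hΨ0 hΨmono hΨconv hΨinv2 hΨinv0 μ hμ
end

section
/- For every integer p ≥ 1 and every a ∈ ℂ with |a| < 1, setting ω = exp(2πi/p), one has (1/p) · Σ_{k=0}^{p−1} 1/|1 − a·ω^k|² = (1 − |a|^{2p}) / ( (1 − |a|²) · |1 − a^p|² ), and this quantity is at least (p/4)·|a|^p. -/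
/-!
Since `(a ω^k)^p = a^p`, the geometric series gives `1 - a^p = (1 - a ω^k) ∑_{n<p} a^n ω^{kn}`, so
`1 / |1 - a ω^k|² = |∑_{n<p} a^n ω^{kn}|² / |1 - a^p|²`. Summing over `k`, orthogonality of the
characters `k ↦ ω^{kn}` (Parseval on the `p`-th roots of unity) turns the numerators into
`p ∑_{n<p} |a|^{2n} = p (1 - |a|^{2p}) / (1 - |a|²)`. For the bound, pairing `n` with `p - 1 - n`
in this geometric sum and applying AM-GM gives at least `p |a|^{p-1} ≥ p |a|^p`, while `|1 - a^p| ≤ 2`.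
-/

open Finset ComplexConjugate

namespace IsPrimitiveRoot

variable {p : ℕ} {ζ : ℂ}

theorem geom_sum_pow_mul_conj_pow (hζ : IsPrimitiveRoot ζ p) {m n : ℕ} (hm : m < p)
    (hn : n < p) :
    ∑ k ∈ range p, (ζ ^ m * conj (ζ ^ n)) ^ k = if m = n then (p : ℂ) else 0 := by
  have hp : p ≠ 0 := by omega
  have hζn : ζ ^ n ≠ 0 := pow_ne_zero _ (hζ.ne_zero hp)
  rw [← Complex.inv_eq_conj (by rw [norm_pow, hζ.norm'_eq_one hp, one_pow]), ← div_eq_mul_inv]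
  split_ifs with hmn
  · simp [hmn, hζn]
  · have hne : ζ ^ m / ζ ^ n ≠ 1 :=
      fun h => hmn (hζ.pow_inj hm hn ((div_eq_one_iff_eq hζn).mp h))
    rw [geom_sum_eq hne, div_pow, ← pow_mul, ← pow_mul, mul_comm m, mul_comm n, pow_mul, pow_mul,
      hζ.pow_eq_one]
    simp

theorem sum_sq_norm_sum_mul_pow (hζ : IsPrimitiveRoot ζ p) (c : ℕ → ℂ) :
    ∑ k ∈ range p, ‖∑ n ∈ range p, c n * (ζ ^ k) ^ n‖ ^ 2 = p * ∑ n ∈ range p, ‖c n‖ ^ 2 := by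
  have hterm : ∀ k m n, c m * (ζ ^ k) ^ m * conj (c n * (ζ ^ k) ^ n) =
      c m * conj (c n) * (ζ ^ m * conj (ζ ^ n)) ^ k := by
    intro k m n
    simp only [map_mul, map_pow]
    ring
  apply Complex.ofReal_injective
  push_cast
  simp_rw [← Complex.mul_conj', map_sum, sum_mul_sum, hterm]
  rw [sum_comm, mul_sum]
  refine sum_congr rfl fun m hm => ?_
  rw [sum_comm]
  simp_rw [← mul_sum]
  rw [sum_congr rfl fun n hn => by
    rw [hζ.geom_sum_pow_mul_conj_pow (mem_range.1 hm) (mem_range.1 hn)]]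
  simp only [mul_ite, mul_zero, sum_ite_eq, if_pos hm, Complex.mul_conj']
  ring

theorem sum_one_div_sq_norm_one_sub_mul_pow (hζ : IsPrimitiveRoot ζ p) {a : ℂ} (ha : a ^ p ≠ 1) :
    ∑ k ∈ range p, 1 / ‖1 - a * ζ ^ k‖ ^ 2 =
      p * (∑ n ∈ range p, (‖a‖ ^ 2) ^ n) / ‖1 - a ^ p‖ ^ 2 := by
  have hfactor : ∀ k, (1 - a * ζ ^ k) * ∑ n ∈ range p, a ^ n * (ζ ^ k) ^ n = 1 - a ^ p := by
    intro k
    have hζk : (ζ ^ k) ^ p = 1 := by rw [← pow_mul, mul_comm, pow_mul, hζ.pow_eq_one, one_pow]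
    simpa only [mul_pow, hζk, mul_one] using mul_neg_geom_sum (a * ζ ^ k) p
  have hterm : ∀ k, 1 / ‖1 - a * ζ ^ k‖ ^ 2 =
      ‖∑ n ∈ range p, a ^ n * (ζ ^ k) ^ n‖ ^ 2 / ‖1 - a ^ p‖ ^ 2 := by
    intro k
    have hne : (1 - a * ζ ^ k) * ∑ n ∈ range p, a ^ n * (ζ ^ k) ^ n ≠ 0 :=
      hfactor k ▸ sub_ne_zero.2 (Ne.symm ha)
    rw [mul_ne_zero_iff, ← norm_ne_zero_iff, ← norm_ne_zero_iff] at hne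
    rw [← hfactor k, norm_mul]
    field_simp [hne.1, hne.2]
  rw [sum_congr rfl fun k _ => hterm k, ← sum_div, hζ.sum_sq_norm_sum_mul_pow]
  simp only [norm_pow, ← pow_mul, mul_comm]

end IsPrimitiveRoot

theorem natCast_mul_pow_sub_one_le_geom_sum_sq (x : ℝ) (p : ℕ) :
    p * x ^ (p - 1) ≤ ∑ n ∈ range p, (x ^ 2) ^ n := by
  have hpair : ∀ n ∈ range p, 2 * x ^ (p - 1) ≤ (x ^ 2) ^ n + (x ^ 2) ^ (p - 1 - n) := by
    intro n hn
    have hsplit : x ^ (p - 1) = x ^ n * x ^ (p - 1 - n) := by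
      rw [← pow_add]
      congr 1
      have := mem_range.1 hn
      omega
    have hsq : ∀ m, (x ^ 2) ^ m = (x ^ m) ^ 2 := fun m => by rw [← pow_mul, mul_comm, pow_mul]
    rw [hsplit, hsq, hsq, ← mul_assoc]
    exact two_mul_le_add_sq _ _
  have hsum := sum_le_sum hpair
  rw [sum_add_distrib, sum_range_reflect (fun n => (x ^ 2) ^ n) p, sum_const, card_range,
    nsmul_eq_mul] at hsum
  linarith

theorem stmt_15 (p : ℕ) (hp : 1 ≤ p) (a : ℂ) (ha : ‖a‖ < 1) :
    ((1 : ℝ) / p) * ∑ k ∈ Finset.range p,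
        1 / (‖1 - a * Complex.exp (2 * (Real.pi : ℂ) * Complex.I / p) ^ k‖) ^ 2
      = (1 - (‖a‖) ^ (2 * p)) /
        ((1 - (‖a‖) ^ 2) * (‖1 - a ^ p‖) ^ 2) ∧
    ((p : ℝ) / 4) * (‖a‖) ^ p ≤
      (1 - (‖a‖) ^ (2 * p)) /
        ((1 - (‖a‖) ^ 2) * (‖1 - a ^ p‖) ^ 2) := by
  have hω := Complex.isPrimitiveRoot_exp p (by omega)
  have hap : ‖a ^ p‖ < 1 := by
    rw [norm_pow]
    exact pow_lt_one₀ (norm_nonneg a) ha (by omega)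
  have hap1 : a ^ p ≠ 1 := fun h => by simp [h] at hap
  have hN : 0 < ‖1 - a ^ p‖ := norm_pos_iff.2 (sub_ne_zero.2 (Ne.symm hap1))
  have hN2 : ‖1 - a ^ p‖ ≤ 2 := by linarith [norm_sub_le (1 : ℂ) (a ^ p), norm_one (α := ℂ)]
  have ht : ‖a‖ ^ 2 < 1 := by nlinarith [norm_nonneg a]
  have hS : (1 - ‖a‖ ^ (2 * p)) / ((1 - ‖a‖ ^ 2) * ‖1 - a ^ p‖ ^ 2) =
      (∑ n ∈ range p, (‖a‖ ^ 2) ^ n) / ‖1 - a ^ p‖ ^ 2 := by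
    rw [pow_mul, ← mul_neg_geom_sum, mul_div_mul_left _ _ (sub_pos.2 ht).ne']
  rw [hω.sum_one_div_sq_norm_one_sub_mul_pow hap1, hS]
  set S := ∑ n ∈ range p, (‖a‖ ^ 2) ^ n
  refine ⟨by field_simp, ?_⟩
  calc (p : ℝ) / 4 * ‖a‖ ^ p ≤ p / 4 * ‖a‖ ^ (p - 1) := by
        have := pow_le_pow_of_le_one (norm_nonneg a) ha.le (Nat.sub_le p 1)
        gcongr
    _ ≤ S / 4 := by linarith [natCast_mul_pow_sub_one_le_geom_sum_sq ‖a‖ p]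
    _ ≤ S / ‖1 - a ^ p‖ ^ 2 := by
        have : 0 ≤ S := by positivity
        gcongr
        nlinarith
end

section
/- There exists a sequence (z_n)_{n≥1} in the open unit disk 𝔻 = {z ∈ ℂ : |z| < 1} satisfying the Blaschke condition Σ_{n≥1} (1 − |z_n|) < ∞ and such that for every ε > 0 there is c_ε > 0 with Σ_{n≥1} (1 − |z|²)(1 − |z_n|²)/|1 − conj(z_n)·z|² ≥ c_ε · (1 − |z|)^ε for every z ∈ 𝔻. -/
/-!
Put `2 ^ n` points at the `2 ^ n`-th roots of unity on the circle of radius `1 - δₙ`,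
`δₙ = 2⁻ⁿ / (n + 1) ^ 2`. Level `n` contributes `2 ^ n δₙ = 1 / (n + 1) ^ 2` to the Blaschke sum.
If `2⁻ⁿ ≤ 1 - ‖w‖ ≤ 2 * 2⁻ⁿ`, the nearest point `z` of level `n` satisfies
`‖1 - conj z * w‖ ≲ 1 - ‖w‖`, so its single term is `≳ δₙ / (1 - ‖w‖) ≈ 1 / (n + 1) ^ 2`.
This decays only polynomially in `n ≈ log₂ (1 / (1 - ‖w‖))`, hence dominates every
`(1 - ‖w‖) ^ ε`.
-/

open Complex Real Filter

/-- `1 - ρ(z, w) ^ 2`, where `ρ(z, w) = ‖(z - w) / (1 - conj z * w)‖` is the pseudo-hyperbolic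
distance of the unit disc. -/
noncomputable def blaschkeKernel (w z : ℂ) : ℝ :=
  (1 - ‖w‖ ^ 2) * (1 - ‖z‖ ^ 2) / ‖1 - (starRingEnd ℂ) z * w‖ ^ 2

section blaschkeKernel

variable {w z : ℂ}

lemma one_sub_norm_le_norm_one_sub_conj_mul (hz : ‖z‖ ≤ 1) :
    1 - ‖w‖ ≤ ‖1 - (starRingEnd ℂ) z * w‖ :=
  calc 1 - ‖w‖ ≤ ‖(1 : ℂ)‖ - ‖(starRingEnd ℂ) z * w‖ := by
        rw [norm_one, norm_mul, norm_conj]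
        nlinarith [norm_nonneg w]
    _ ≤ ‖1 - (starRingEnd ℂ) z * w‖ := norm_sub_norm_le _ _

lemma blaschkeKernel_nonneg (hw : ‖w‖ ≤ 1) (hz : ‖z‖ ≤ 1) : 0 ≤ blaschkeKernel w z := by
  have hw2 : ‖w‖ ^ 2 ≤ 1 := pow_le_one₀ (norm_nonneg w) hw
  have hz2 : ‖z‖ ^ 2 ≤ 1 := pow_le_one₀ (norm_nonneg z) hz
  unfold blaschkeKernel
  exact div_nonneg (mul_nonneg (by linarith) (by linarith)) (sq_nonneg _)

lemma blaschkeKernel_le (hw : ‖w‖ < 1) (hz : ‖z‖ ≤ 1) :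
    blaschkeKernel w z ≤ 2 * (1 - ‖z‖) / (1 - ‖w‖) ^ 2 := by
  have hw0 : 0 < 1 - ‖w‖ := by linarith
  have hnum : (1 - ‖w‖ ^ 2) * (1 - ‖z‖ ^ 2) ≤ 2 * (1 - ‖z‖) := by
    nlinarith [norm_nonneg w, norm_nonneg z, mul_nonneg (norm_nonneg z) (sq_nonneg ‖w‖)]
  refine div_le_div₀ (by linarith) hnum (by positivity) ?_
  exact pow_le_pow_left₀ hw0.le (one_sub_norm_le_norm_one_sub_conj_mul hz) 2

lemma div_sq_le_blaschkeKernel (hw : ‖w‖ ≤ 1) (hz : ‖z‖ ≤ 1) :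
    (1 - ‖w‖) * (1 - ‖z‖) / ‖1 - (starRingEnd ℂ) z * w‖ ^ 2 ≤ blaschkeKernel w z := by
  have hw2 : 1 - ‖w‖ ≤ 1 - ‖w‖ ^ 2 := by nlinarith [norm_nonneg w]
  have hz2 : 1 - ‖z‖ ≤ 1 - ‖z‖ ^ 2 := by nlinarith [norm_nonneg z]
  exact div_le_div_of_nonneg_right (mul_le_mul hw2 hz2 (by linarith) (by nlinarith))
    (sq_nonneg _)

lemma summable_blaschkeKernel {ι : Type*} {z : ι → ℂ} (hz : ∀ i, ‖z i‖ ≤ 1)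
    (hs : Summable fun i => 1 - ‖z i‖) (hw : ‖w‖ < 1) :
    Summable fun i => blaschkeKernel w (z i) :=
  ((hs.mul_left 2).div_const ((1 - ‖w‖) ^ 2)).of_nonneg_of_le
    (fun i => blaschkeKernel_nonneg hw.le (hz i)) (fun i => blaschkeKernel_le hw (hz i))

end blaschkeKernel

lemma norm_one_sub_conj_mul_le {ζ ξ : ℂ} (hζ : ‖ζ‖ = 1) (hξ : ‖ξ‖ = 1) {r s : ℝ}
    (hr₀ : 0 ≤ r) (hr₁ : r ≤ 1) (hs₁ : s ≤ 1) :
    ‖1 - (starRingEnd ℂ) (r * ζ) * (s * ξ)‖ ≤ ‖ζ - ξ‖ + (1 - r) + (1 - s) := by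
  have hζζ : (starRingEnd ℂ) ζ * ζ = 1 := by simp [conj_mul', hζ]
  have hsplit : 1 - (starRingEnd ℂ) (r * ζ) * (s * ξ)
      = (starRingEnd ℂ) ζ * (ζ - ξ) + ((1 - r * s : ℝ) : ℂ) * ((starRingEnd ℂ) ζ * ξ) := by
    simp only [map_mul, conj_ofReal]
    push_cast
    linear_combination (-1 : ℂ) * hζζ
  calc ‖1 - (starRingEnd ℂ) (r * ζ) * (s * ξ)‖ ≤ ‖ζ - ξ‖ + (1 - r * s) := by
        rw [hsplit]
        refine (norm_add_le _ _).trans_eq ?_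
        rw [norm_mul, norm_mul, norm_mul, norm_conj, hζ, hξ, norm_real, Real.norm_eq_abs,
          abs_of_nonneg (by nlinarith)]
        ring
    _ ≤ ‖ζ - ξ‖ + (1 - r) + (1 - s) := by
        nlinarith [mul_nonneg (sub_nonneg.2 hr₁) (sub_nonneg.2 hs₁)]

lemma exists_norm_exp_sub_toCircle_le (N : ℕ) [NeZero N] (θ : ℝ) :
    ∃ j : ZMod N, ‖exp (θ * I) - ZMod.toCircle j‖ ≤ 2 * π / N := by
  have hN : (0 : ℝ) < N := Nat.cast_pos.2 (Nat.pos_of_ne_zero (NeZero.ne N))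
  set k : ℤ := ⌊θ * N / (2 * π)⌋
  have hk₁ : 2 * π * k / N ≤ θ := by
    rw [div_le_iff₀ hN, mul_comm, ← le_div_iff₀ (by positivity)]
    exact Int.floor_le _
  have hk₂ : θ < 2 * π * k / N + 2 * π / N := by
    have h := Int.lt_floor_add_one (θ * N / (2 * π))
    rw [div_lt_iff₀ (by positivity)] at h
    rw [← add_div, lt_div_iff₀ hN]
    linarith
  refine ⟨k, ?_⟩
  have hexp : exp (θ * I) - ZMod.toCircle (k : ZMod N)
      = exp (2 * π * I * k / N) * (exp (I * ((θ - 2 * π * k / N : ℝ) : ℂ)) - 1) := by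
    rw [ZMod.toCircle_intCast, mul_sub, ← Complex.exp_add]
    push_cast
    ring_nf
  rw [hexp, norm_mul, ← ZMod.toCircle_intCast, Circle.norm_coe, one_mul]
  refine norm_exp_I_mul_ofReal_sub_one_le.trans ?_
  rw [Real.norm_eq_abs, abs_of_nonneg (by linarith)]
  linarith

noncomputable def dyadicGap (n : ℕ) : ℝ := 2⁻¹ ^ n / (n + 1) ^ 2

noncomputable def dyadicPoint (i : Σ n : ℕ, ZMod (2 ^ n)) : ℂ :=
  ((1 - dyadicGap i.1 : ℝ) : ℂ) * ZMod.toCircle i.2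

lemma dyadicGap_pos (n : ℕ) : 0 < dyadicGap n := by
  unfold dyadicGap; positivity

lemma dyadicGap_le (n : ℕ) : dyadicGap n ≤ 2⁻¹ ^ n :=
  div_le_self (by positivity) (one_le_pow₀ (by linarith [n.cast_nonneg (α := ℝ)]))

lemma dyadicGap_le_one (n : ℕ) : dyadicGap n ≤ 1 :=
  (dyadicGap_le n).trans (pow_le_one₀ (by norm_num) (by norm_num))

lemma two_pow_mul_dyadicGap (n : ℕ) : 2 ^ n * dyadicGap n = 1 / (n + 1) ^ 2 := by
  rw [dyadicGap, inv_pow, mul_div_assoc', mul_inv_cancel₀ (by positivity)]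

lemma norm_dyadicPoint (i : Σ n : ℕ, ZMod (2 ^ n)) : ‖dyadicPoint i‖ = 1 - dyadicGap i.1 := by
  rw [dyadicPoint, norm_mul, Circle.norm_coe, mul_one, norm_real, Real.norm_eq_abs,
    abs_of_nonneg (sub_nonneg.2 (dyadicGap_le_one _))]

lemma norm_dyadicPoint_lt_one (i : Σ n : ℕ, ZMod (2 ^ n)) : ‖dyadicPoint i‖ < 1 := by
  linarith [norm_dyadicPoint i, dyadicGap_pos i.1]

lemma summable_one_sub_norm_dyadicPoint : Summable fun i => 1 - ‖dyadicPoint i‖ := by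
  simp only [norm_dyadicPoint, sub_sub_cancel]
  refine (summable_sigma_of_nonneg fun i => (dyadicGap_pos i.1).le).2
    ⟨fun _ => Summable.of_finite, ?_⟩
  simp only [tsum_fintype, Finset.sum_const, Finset.card_univ, ZMod.card, nsmul_eq_mul,
    Nat.cast_pow, Nat.cast_ofNat, two_pow_mul_dyadicGap]
  exact_mod_cast (summable_nat_add_iff 1).2 (Real.summable_one_div_nat_pow.2 one_lt_two)

lemma exists_norm_one_sub_conj_dyadicPoint_mul_le {n : ℕ} {w : ℂ} (hw : ‖w‖ ≤ 1)
    (hn : 2⁻¹ ^ n ≤ 1 - ‖w‖) :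
    ∃ j, ‖1 - (starRingEnd ℂ) (dyadicPoint ⟨n, j⟩) * w‖ ≤ 9 * (1 - ‖w‖) := by
  obtain ⟨j, hj⟩ := exists_norm_exp_sub_toCircle_le (2 ^ n) w.arg
  refine ⟨j, ?_⟩
  have hroot : ‖(ZMod.toCircle j : ℂ) - exp (w.arg * I)‖ ≤ 2 * π * (1 - ‖w‖) := by
    rw [norm_sub_rev]
    refine hj.trans ?_
    rw [Nat.cast_pow, Nat.cast_ofNat, div_eq_mul_inv, ← inv_pow]
    gcongr
  have hgap : dyadicGap n ≤ 1 - ‖w‖ := (dyadicGap_le n).trans hn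
  have hbound := norm_one_sub_conj_mul_le (Circle.norm_coe (ZMod.toCircle j))
    (norm_exp_ofReal_mul_I w.arg) (sub_nonneg.2 (dyadicGap_le_one n))
    (by linarith [dyadicGap_pos n]) hw
  rw [norm_mul_exp_arg_mul_I] at hbound
  calc ‖1 - (starRingEnd ℂ) (dyadicPoint ⟨n, j⟩) * w‖
      ≤ ‖(ZMod.toCircle j : ℂ) - exp (w.arg * I)‖ + dyadicGap n + (1 - ‖w‖) := by
        simpa [dyadicPoint] using hbound
    _ ≤ 9 * (1 - ‖w‖) := by nlinarith [pi_lt_d2, norm_nonneg w]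

lemma exists_le_blaschkeKernel_dyadicPoint {n : ℕ} {w : ℂ} (hw : ‖w‖ ≤ 1)
    (hn : 2⁻¹ ^ n ≤ 1 - ‖w‖) (hn' : 1 - ‖w‖ ≤ 2 * 2⁻¹ ^ n) :
    ∃ j, 1 / (162 * (n + 1) ^ 2) ≤ blaschkeKernel w (dyadicPoint ⟨n, j⟩) := by
  obtain ⟨j, hj⟩ := exists_norm_one_sub_conj_dyadicPoint_mul_le hw hn
  refine ⟨j, le_trans ?_ (div_sq_le_blaschkeKernel hw (norm_dyadicPoint_lt_one _).le)⟩
  set t := 1 - ‖w‖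
  have ht : 0 < t := lt_of_lt_of_le (by positivity) hn
  have hden : 0 < ‖1 - (starRingEnd ℂ) (dyadicPoint ⟨n, j⟩) * w‖ :=
    ht.trans_le (one_sub_norm_le_norm_one_sub_conj_mul (norm_dyadicPoint_lt_one _).le)
  rw [norm_dyadicPoint, sub_sub_cancel]
  calc 1 / (162 * (n + 1) ^ 2) = 2 ^ n * dyadicGap n / 162 := by
        rw [two_pow_mul_dyadicGap]; field_simp
    _ ≤ dyadicGap n / (81 * t) := by
        rw [div_le_div_iff₀ (by norm_num) (by positivity)]
        have h2n : (2 : ℝ) ^ n * 2⁻¹ ^ n = 1 := by rw [← mul_pow]; norm_num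
        have ht2 : 2 ^ n * t ≤ 2 := by
          nlinarith [mul_le_mul_of_nonneg_left hn' (pow_pos (two_pos (α := ℝ)) n).le]
        nlinarith [mul_le_mul_of_nonneg_left ht2 (dyadicGap_pos n).le]
    _ = t * dyadicGap n / (9 * t) ^ 2 := by field_simp; ring
    _ ≤ t * dyadicGap n / ‖1 - (starRingEnd ℂ) (dyadicPoint ⟨n, j⟩) * w‖ ^ 2 := by
        gcongr
        exact mul_nonneg ht.le (dyadicGap_pos n).le

lemma exists_sq_mul_pow_le {r : ℝ} (hr₀ : 0 < r) (hr₁ : r < 1) :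
    ∃ C, ∀ n : ℕ, ((n : ℝ) + 1) ^ 2 * r ^ n ≤ C := by
  have h := (tendsto_pow_const_mul_const_pow_of_abs_lt_one 2
    (abs_lt.2 ⟨by linarith, hr₁⟩)).comp (tendsto_add_atTop_nat 1)
  have h' : Tendsto (fun n : ℕ => ((n : ℝ) + 1) ^ 2 * r ^ n) atTop (nhds 0) := by
    convert h.div_const r using 1
    · ext n
      simp only [Function.comp_apply, Nat.cast_add, Nat.cast_one, pow_succ]
      field_simp
    · rw [zero_div]
  obtain ⟨C, hC⟩ := h'.bddAbove_range
  exact ⟨C, fun n => hC ⟨n, rfl⟩⟩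

lemma exists_rpow_le_blaschkeKernel_dyadicPoint {ε : ℝ} (hε : 0 < ε) :
    ∃ c > 0, ∀ w : ℂ, ‖w‖ < 1 → ∃ i, c * (1 - ‖w‖) ^ ε ≤ blaschkeKernel w (dyadicPoint i) := by
  set r : ℝ := 2⁻¹ ^ ε with hr
  have hr₀ : 0 < r := by positivity
  obtain ⟨C, hC⟩ := exists_sq_mul_pow_le hr₀ (rpow_lt_one (by norm_num) (by norm_num) hε)
  have hC₀ : 0 < C := zero_lt_one.trans_le (by simpa using hC 0)
  refine ⟨1 / (162 * 2 ^ ε * C), by positivity, fun w hw => ?_⟩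
  set t := 1 - ‖w‖
  have ht : 0 < t := sub_pos.2 hw
  obtain ⟨n, hn, hn'⟩ := exists_nat_pow_near_of_lt_one ht (by linarith [norm_nonneg w])
    (by norm_num : (0 : ℝ) < 2⁻¹) (by norm_num)
  have hn'' : t ≤ 2 * 2⁻¹ ^ (n + 1) := by rw [pow_succ]; linarith
  obtain ⟨j, hj⟩ := exists_le_blaschkeKernel_dyadicPoint hw.le hn.le hn''
  refine ⟨⟨n + 1, j⟩, le_trans ?_ hj⟩
  calc 1 / (162 * 2 ^ ε * C) * t ^ ε ≤ 1 / (162 * 2 ^ ε * C) * (2 * 2⁻¹ ^ (n + 1)) ^ ε := by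
        gcongr
    _ = r ^ (n + 1) / (162 * C) := by
        rw [mul_rpow (by norm_num) (by positivity), ← rpow_pow_comm (by norm_num), ← hr]
        field_simp
    _ ≤ 1 / (162 * ((n + 1 : ℕ) + 1) ^ 2) := by
        rw [div_le_div_iff₀ (by positivity) (by positivity)]
        nlinarith [hC (n + 1)]

theorem stmt_16 :
    ∃ z : ℕ → ℂ,
      (∀ n : ℕ, ‖z n‖ < 1) ∧
      Summable (fun n : ℕ => 1 - ‖z n‖) ∧
      ∀ ε > (0 : ℝ), ∃ c > (0 : ℝ), ∀ w : ℂ, ‖w‖ < 1 →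
        c * (1 - ‖w‖) ^ ε ≤
          ∑' n : ℕ, (1 - (‖w‖) ^ 2) * (1 - (‖z n‖) ^ 2) /
            (‖1 - (starRingEnd ℂ) (z n) * w‖) ^ 2 := by
  obtain ⟨e⟩ : Nonempty (ℕ ≃ Σ n : ℕ, ZMod (2 ^ n)) := nonempty_equiv_of_countable
  refine ⟨dyadicPoint ∘ e, fun n => norm_dyadicPoint_lt_one _,
    e.summable_iff.2 summable_one_sub_norm_dyadicPoint, fun ε hε => ?_⟩
  obtain ⟨c, hc, hkernel⟩ := exists_rpow_le_blaschkeKernel_dyadicPoint hε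
  refine ⟨c, hc, fun w hw => ?_⟩
  obtain ⟨i, hi⟩ := hkernel w hw
  have hsum : Summable fun n => blaschkeKernel w (dyadicPoint (e n)) :=
    e.summable_iff.2 (summable_blaschkeKernel (fun i => (norm_dyadicPoint_lt_one i).le)
      summable_one_sub_norm_dyadicPoint hw)
  calc c * (1 - ‖w‖) ^ ε ≤ blaschkeKernel w (dyadicPoint (e (e.symm i))) := by
        rwa [e.apply_symm_apply]
    _ ≤ ∑' n, blaschkeKernel w (dyadicPoint (e n)) :=
        hsum.le_tsum _ fun n _ => blaschkeKernel_nonneg hw.le (norm_dyadicPoint_lt_one _).le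
end

section
/- Let Ψ be an Orlicz function. (1) If Ψ satisfies condition Δ², then Ψ satisfies condition ∇₀ uniformly: there exist C ≥ 1 and x₀ > 0 such that Ψ(βx)·Ψ(y) ≤ Ψ(C·β·y)·Ψ(x) for every β > 1 and all x, y with x₀ ≤ x ≤ y. (2) If Ψ satisfies condition ∇₀ uniformly, then Ψ satisfies condition ∇₁: there exist b > 0 and x₁ > 0 such that Ψ(u)·Ψ(v) ≤ Ψ(b·u·v) for all u, v ≥ x₁. -/
/-!
(1) For `x₀ ≤ x ≤ y` put `z = max (β x) y ≤ β y`; then `Δ²` gives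
`Ψ(βx) Ψ(y) ≤ Ψ(z)² ≤ Ψ(αz) ≤ Ψ(αβy)`, and the factor `Ψ(x)` on the right costs nothing once `x₀`
is so large that `Ψ ≥ 1` beyond it.
(2) Apply `∇₀` with `x = x₀` and `β = u / x₀`: this gives `Ψ(u) Ψ(v) ≤ Ψ(x₀) Ψ(C u v / x₀)`, and the
constant `Ψ(x₀)` is moved inside by the superhomogeneity `K Ψ(t) ≤ Ψ(K t)` (`K ≥ 1`) of a convex
function vanishing at `0`.
-/

open Set Filter

def DeltaTwo (Ψ : ℝ → ℝ) : Prop :=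
  ∃ α > (1 : ℝ), ∃ x₀ > (0 : ℝ), ∀ x ≥ x₀, (Ψ x) ^ 2 ≤ Ψ (α * x)

def UniformNablaZero (Ψ : ℝ → ℝ) : Prop :=
  ∃ C ≥ (1 : ℝ), ∃ x₀ > (0 : ℝ), ∀ β > (1 : ℝ), ∀ x y : ℝ,
    x₀ ≤ x → x ≤ y → Ψ (β * x) * Ψ y ≤ Ψ (C * β * y) * Ψ x

def NablaOne (Ψ : ℝ → ℝ) : Prop :=
  ∃ b > (0 : ℝ), ∃ x₁ > (0 : ℝ), ∀ u v : ℝ, x₁ ≤ u → x₁ ≤ v → Ψ u * Ψ v ≤ Ψ (b * u * v)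

section

variable {Ψ : ℝ → ℝ}

theorem ConvexOn.map_mul_le_mul_of_map_zero (hconv : ConvexOn ℝ (Ici 0) Ψ) (h0 : Ψ 0 = 0)
    {c x : ℝ} (hc₀ : 0 ≤ c) (hc₁ : c ≤ 1) (hx : 0 ≤ x) : Ψ (c * x) ≤ c * Ψ x := by
  have := hconv.2 (mem_Ici.2 le_rfl) (mem_Ici.2 hx) (sub_nonneg.2 hc₁) hc₀ (by ring)
  simpa [h0] using this

theorem ConvexOn.mul_map_le_map_mul (hconv : ConvexOn ℝ (Ici 0) Ψ) (h0 : Ψ 0 = 0)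
    {K t : ℝ} (hK : 1 ≤ K) (ht : 0 ≤ t) : K * Ψ t ≤ Ψ (K * t) := by
  have hK₀ : 0 < K := by linarith
  have := hconv.map_mul_le_mul_of_map_zero h0 (inv_nonneg.2 hK₀.le) (inv_le_one_of_one_le₀ hK)
    (mul_nonneg hK₀.le ht)
  rwa [inv_mul_cancel_left₀ hK₀.ne', ← div_eq_inv_mul, le_div_iff₀' hK₀] at this

theorem MonotoneOn.map_nonneg_of_map_zero (hmono : MonotoneOn Ψ (Ici 0)) (h0 : Ψ 0 = 0)
    {x : ℝ} (hx : 0 ≤ x) : 0 ≤ Ψ x :=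
  h0 ▸ hmono (mem_Ici.2 le_rfl) (mem_Ici.2 hx) hx

theorem eventually_one_le_of_tendsto_div_atTop
    (hlim : Tendsto (fun x => Ψ x / x) atTop atTop) : ∀ᶠ x in atTop, 1 ≤ Ψ x := by
  filter_upwards [hlim.eventually_ge_atTop 1, eventually_ge_atTop 1] with x hΨx hx
  have := (le_div_iff₀ (by linarith)).1 hΨx
  linarith

theorem DeltaTwo.uniformNablaZero (h0 : Ψ 0 = 0) (hmono : MonotoneOn Ψ (Ici 0))
    (hlim : Tendsto (fun x => Ψ x / x) atTop atTop) (hΔ : DeltaTwo Ψ) : UniformNablaZero Ψ := by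
  obtain ⟨α, hα, x₀, -, hΔ⟩ := hΔ
  obtain ⟨x₁, hx₁⟩ := eventually_atTop.1
    ((eventually_one_le_of_tendsto_div_atTop hlim).and (eventually_ge_atTop (max x₀ 1)))
  have hx₁x₀ : x₀ ≤ x₁ := (le_max_left _ _).trans (hx₁ x₁ le_rfl).2
  have hx₁_pos : 0 < x₁ := zero_lt_one.trans_le ((le_max_right _ _).trans (hx₁ x₁ le_rfl).2)
  refine ⟨α, hα.le, x₁, hx₁_pos, fun β hβ x y hx₁x hxy => ?_⟩
  have hx : 0 ≤ x := by linarith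
  have hy : 0 ≤ y := by linarith
  have hβx : 0 ≤ β * x := by positivity
  set z := max (β * x) y
  have hz : 0 ≤ z := hy.trans (le_max_right _ _)
  have hzβy : z ≤ β * y := max_le (by gcongr) (by nlinarith)
  calc Ψ (β * x) * Ψ y
      ≤ Ψ z ^ 2 := by
        rw [sq]
        exact mul_le_mul (hmono hβx hz (le_max_left _ _)) (hmono hy hz (le_max_right _ _))
          (hmono.map_nonneg_of_map_zero h0 hy) (hmono.map_nonneg_of_map_zero h0 hz)
    _ ≤ Ψ (α * z) := hΔ z (by linarith [le_max_right (β * x) y])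
    _ ≤ Ψ (α * β * y) := by
        rw [mul_assoc]
        exact hmono (mem_Ici.2 (by positivity)) (mem_Ici.2 (by positivity)) (by gcongr)
    _ ≤ Ψ (α * β * y) * Ψ x :=
        le_mul_of_one_le_right (hmono.map_nonneg_of_map_zero h0 (by positivity))
          (hx₁ x hx₁x).1

theorem UniformNablaZero.nablaOne (h0 : Ψ 0 = 0) (hmono : MonotoneOn Ψ (Ici 0))
    (hconv : ConvexOn ℝ (Ici 0) Ψ) (hN : UniformNablaZero Ψ) : NablaOne Ψ := by
  obtain ⟨C, hC, x₀, hx₀, hN⟩ := hN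
  set K := max (Ψ x₀) 1
  refine ⟨K * C / x₀, by positivity, x₀ + 1, by linarith, fun u v hu hv => ?_⟩
  have hβ : 1 < u / x₀ := by rw [lt_div_iff₀ hx₀]; linarith
  have ht : 0 ≤ C * (u / x₀) * v := by
    have : 0 < u / x₀ := by linarith
    have : 0 ≤ v := by linarith
    positivity
  calc Ψ u * Ψ v
      = Ψ (u / x₀ * x₀) * Ψ v := by rw [div_mul_cancel₀ u hx₀.ne']
    _ ≤ Ψ (C * (u / x₀) * v) * Ψ x₀ := hN _ hβ x₀ v le_rfl (by linarith)
    _ ≤ K * Ψ (C * (u / x₀) * v) := by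
        rw [mul_comm]
        exact mul_le_mul_of_nonneg_right (le_max_left _ _) (hmono.map_nonneg_of_map_zero h0 ht)
    _ ≤ Ψ (K * (C * (u / x₀) * v)) := hconv.mul_map_le_map_mul h0 (le_max_right _ _) ht
    _ = Ψ (K * C / x₀ * u * v) := by congr 1; field_simp

end

theorem stmt_17_general
    (Ψ : ℝ → ℝ)
    (hΨ0 : Ψ 0 = 0)
    (hΨmono : StrictMonoOn Ψ (Set.Ici 0))
    (hΨconv : StrictConvexOn ℝ (Set.Ici 0) Ψ)
    (hΨlim : Filter.Tendsto (fun x => Ψ x / x) Filter.atTop Filter.atTop) :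
    -- (1) Δ² implies ∇₀ uniformly
    ((∃ α > (1 : ℝ), ∃ x₀ > (0 : ℝ), ∀ x ≥ x₀, (Ψ x) ^ 2 ≤ Ψ (α * x)) →
      ∃ C ≥ (1 : ℝ), ∃ x₀ > (0 : ℝ), ∀ β > (1 : ℝ), ∀ x y : ℝ,
        x₀ ≤ x → x ≤ y → Ψ (β * x) * Ψ y ≤ Ψ (C * β * y) * Ψ x) ∧
    -- (2) ∇₀ uniformly implies ∇₁
    ((∃ C ≥ (1 : ℝ), ∃ x₀ > (0 : ℝ), ∀ β > (1 : ℝ), ∀ x y : ℝ,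
        x₀ ≤ x → x ≤ y → Ψ (β * x) * Ψ y ≤ Ψ (C * β * y) * Ψ x) →
      ∃ b > (0 : ℝ), ∃ x₁ > (0 : ℝ), ∀ u v : ℝ,
        x₁ ≤ u → x₁ ≤ v → Ψ u * Ψ v ≤ Ψ (b * u * v)) :=
  ⟨DeltaTwo.uniformNablaZero hΨ0 hΨmono.monotoneOn hΨlim,
    UniformNablaZero.nablaOne hΨ0 hΨmono.monotoneOn hΨconv.convexOn⟩

theorem stmt_17
    (Ψ Ψinv : ℝ → ℝ)
    (hΨ0 : Ψ 0 = 0)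
    (hΨmono : StrictMonoOn Ψ (Set.Ici 0))
    (hΨconv : StrictConvexOn ℝ (Set.Ici 0) Ψ)
    (hΨcont : ContinuousOn Ψ (Set.Ici 0))
    (hΨlim : Filter.Tendsto (fun x => Ψ x / x) Filter.atTop Filter.atTop)
    (hΨinv1 : ∀ x, 0 ≤ x → Ψinv (Ψ x) = x)
    (hΨinv2 : ∀ y, 0 ≤ y → Ψ (Ψinv y) = y)
    (hΨinv0 : ∀ y, 0 ≤ y → 0 ≤ Ψinv y) :
    -- (1) Δ² implies ∇₀ uniformly
    ((∃ α > (1 : ℝ), ∃ x₀ > (0 : ℝ), ∀ x ≥ x₀, (Ψ x) ^ 2 ≤ Ψ (α * x)) →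
      ∃ C ≥ (1 : ℝ), ∃ x₀ > (0 : ℝ), ∀ β > (1 : ℝ), ∀ x y : ℝ,
        x₀ ≤ x → x ≤ y → Ψ (β * x) * Ψ y ≤ Ψ (C * β * y) * Ψ x) ∧
    -- (2) ∇₀ uniformly implies ∇₁
    ((∃ C ≥ (1 : ℝ), ∃ x₀ > (0 : ℝ), ∀ β > (1 : ℝ), ∀ x y : ℝ,
        x₀ ≤ x → x ≤ y → Ψ (β * x) * Ψ y ≤ Ψ (C * β * y) * Ψ x) →
      ∃ b > (0 : ℝ), ∃ x₁ > (0 : ℝ), ∀ u v : ℝ,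
        x₁ ≤ u → x₁ ≤ v → Ψ u * Ψ v ≤ Ψ (b * u * v)) :=
  stmt_17_general Ψ hΨ0 hΨmono hΨconv hΨlim
end
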